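/- In the general planted partition model with base probability q and intra-cluster edge probabilities exceeding q, the expected cost of any tree T equals q(n³ − n)/3 + cost_H(T), where H is the weighted graph on V with edges only within clusters, of weight Pr(edge) − q. -/

import Mathlib

open Finset

/-- A rooted binary tree whose leaves are labeled by elements of `Fin n`. -/
inductive HTree (n : ℕ) : Type where
  | leaf : Fin n → HTree n
  | node : HTree n → HTree n → HTree n

namespace HTree

variable {n : ℕ}

/-- The list of leaf labels, left to right. -/
def leafList : HTree n → List (Fin n)
  | .leaf v => [v]
  | .node l r => l.leafList ++ r.leafList

/-- The set of leaf labels of a tree. -/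
def leaves (T : HTree n) : Finset (Fin n) := T.leafList.toFinset

/-- `T` is a hierarchical clustering tree of the whole vertex set `Fin n`:
its leaves are in one-to-one correspondence with `Fin n`. -/
def IsFullTree (T : HTree n) : Prop := T.leafList.Nodup ∧ T.leaves = Finset.univ

/-- `|leaves(T[i ∨ j])|`: the number of leaves of the subtree rooted at the
lowest common ancestor of leaves `i` and `j`. -/
def lcaSize : HTree n → Fin n → Fin n → ℕ
  | .leaf _, _, _ => 1
  | .node l r, i, j =>
    if i ∈ l.leaves ∧ j ∈ l.leaves then l.lcaSize i j
    else if i ∈ r.leaves ∧ j ∈ r.leaves then r.lcaSize i j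
    else (l.leaves ∪ r.leaves).card

/-- `cost_G(T) = Σ_{{i,j}} w_{ij} |leaves(T[i ∨ j])|`, the sum being over
unordered pairs (represented as ordered pairs `p.1 < p.2`). -/
def pairCost (w : Fin n → Fin n → ℝ) (T : HTree n) : ℝ :=
  ∑ p ∈ Finset.univ.filter (fun p : Fin n × Fin n => p.1 < p.2),
    w p.1 p.2 * (T.lcaSize p.1 p.2 : ℝ)

/-- `w(A, B)`: total weight of edges between `A` and `B`. -/
def cut (w : Fin n → Fin n → ℝ) (A B : Finset (Fin n)) : ℝ :=
  ∑ i ∈ A, ∑ j ∈ B, w i j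

/-- The sum-of-splits formulation of the cost:
`Σ over internal splits S → (S₁,S₂) of |S| ⬝ w(S₁,S₂)`. -/
def splitCost (w : Fin n → Fin n → ℝ) : HTree n → ℝ
  | .leaf _ => 0
  | .node l r =>
      ((l.leaves ∪ r.leaves).card : ℝ) * cut w l.leaves r.leaves
        + splitCost w l + splitCost w r

/-- `Subtree t T`: `t` occurs as a subtree of `T`. -/
inductive Subtree : HTree n → HTree n → Prop
  | refl (t : HTree n) : Subtree t t
  | left {t l r : HTree n} : Subtree t l → Subtree t (.node l r)
  | right {t l r : HTree n} : Subtree t r → Subtree t (.node l r)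

end HTree

/-!
For `i ≠ j` we have `p i j = q + w_H(i, j)`, and the cost is linear in the weights, so
`cost_G(T) = q · Σ_{i<j} |leaves(T[i ∨ j])| + cost_H(T)`. The remaining sum does not depend
on `T`: summed over all ordered pairs of leaves (diagonal included, where the value is 1) it
obeys `S(a + b) = S(a) + S(b) + 2ab(a + b)` at a split into parts of sizes `a` and `b`, so
`3 S(m) = 2m³ + m` and hence `Σ_{i<j} |leaves(T[i ∨ j])| = (n³ - n)/3`.
-/

namespace Finset

theorem sum_sum_eq_two_nsmul_sum_lt_add_sum_diag {ι M : Type*} [LinearOrder ι]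
    [AddCommMonoid M] (s : Finset ι) (f : ι → ι → M) (hf : ∀ i j, f i j = f j i) :
    ∑ i ∈ s, ∑ j ∈ s, f i j
      = 2 • ∑ x ∈ s ×ˢ s with x.1 < x.2, f x.1 x.2 + ∑ i ∈ s, f i i := by
  have hswap : ∑ x ∈ s ×ˢ s with x.2 < x.1, f x.1 x.2
      = ∑ x ∈ s ×ˢ s with x.1 < x.2, f x.1 x.2 :=
    sum_nbij' Prod.swap Prod.swap (by simp +contextual) (by simp +contextual) (by simp) (by simp)
      (fun x _ => hf x.1 x.2)
  have htrichotomy : ∀ x : ι × ι, f x.1 x.2 = (if x.1 < x.2 then f x.1 x.2 else 0)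
      + (if x.2 < x.1 then f x.1 x.2 else 0) + (if x.1 = x.2 then f x.1 x.2 else 0) := by
    rintro ⟨i, j⟩
    rcases lt_trichotomy i j with h | rfl | h
    · simp [h, h.not_gt, h.ne]
    · simp
    · simp [h, h.not_gt, h.ne']
  rw [← sum_product' (f := f), sum_congr rfl fun x _ => htrichotomy x, sum_add_distrib,
    sum_add_distrib, ← sum_filter, ← sum_filter, hswap,
    sum_product' (f := fun i j => if i = j then f i j else 0)]
  simp [two_nsmul]

end Finset

namespace HTree

variable {n : ℕ}

@[simp]
theorem leaves_leaf (v : Fin n) : (leaf v).leaves = {v} := by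
  simp [leaves, leafList]

@[simp]
theorem leaves_node (l r : HTree n) : (node l r).leaves = l.leaves ∪ r.leaves := by
  simp [leaves, leafList]

theorem disjoint_leaves_of_nodup_node {l r : HTree n} (h : (node l r).leafList.Nodup) :
    Disjoint l.leaves r.leaves := by
  simp only [leafList, List.nodup_append] at h
  exact List.disjoint_toFinset_iff_disjoint.mpr fun a hl hr => h.2.2 a hl a hr rfl

theorem lcaSize_comm : ∀ (T : HTree n) (i j : Fin n), T.lcaSize i j = T.lcaSize j i
  | .leaf _, _, _ => rfl
  | .node l r, i, j => by
    simp only [lcaSize, and_comm (a := i ∈ _), lcaSize_comm l i j, lcaSize_comm r i j]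

theorem lcaSize_self : ∀ {T : HTree n} {i : Fin n}, i ∈ T.leaves → T.lcaSize i i = 1
  | .leaf _, _, _ => rfl
  | .node l r, i, h => by
    by_cases hl : i ∈ l.leaves
    · simp [lcaSize, hl, lcaSize_self hl]
    · have hr : i ∈ r.leaves := by simpa [hl] using h
      simp [lcaSize, hl, hr, lcaSize_self hr]

section node

variable {l r : HTree n} {i j : Fin n}

theorem lcaSize_node_of_mem_left (hi : i ∈ l.leaves) (hj : j ∈ l.leaves) :
    (node l r).lcaSize i j = l.lcaSize i j := by
  simp [lcaSize, hi, hj]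

theorem lcaSize_node_of_mem_right (hd : Disjoint l.leaves r.leaves) (hi : i ∈ r.leaves)
    (hj : j ∈ r.leaves) : (node l r).lcaSize i j = r.lcaSize i j := by
  simp [lcaSize, hi, hj, disjoint_right.mp hd hi]

theorem lcaSize_node_of_mem_left_of_mem_right (hd : Disjoint l.leaves r.leaves)
    (hi : i ∈ l.leaves) (hj : j ∈ r.leaves) :
    (node l r).lcaSize i j = #l.leaves + #r.leaves := by
  simp [lcaSize, disjoint_right.mp hd hj, disjoint_left.mp hd hi, card_union_of_disjoint hd]

end node

theorem three_mul_sum_sum_lcaSize : ∀ {T : HTree n}, T.leafList.Nodup →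
    3 * ∑ i ∈ T.leaves, ∑ j ∈ T.leaves, T.lcaSize i j = 2 * #T.leaves ^ 3 + #T.leaves
  | .leaf v, _ => by simp [lcaSize]
  | .node l r, h => by
    have hd := disjoint_leaves_of_nodup_node h
    simp only [leafList, List.nodup_append] at h
    have ihl := three_mul_sum_sum_lcaSize h.1
    have ihr := three_mul_sum_sum_lcaSize h.2.1
    have hLL : ∑ i ∈ l.leaves, ∑ j ∈ l.leaves, (node l r).lcaSize i j
        = ∑ i ∈ l.leaves, ∑ j ∈ l.leaves, l.lcaSize i j :=
      sum_congr rfl fun i hi => sum_congr rfl fun j hj => lcaSize_node_of_mem_left hi hj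
    have hRR : ∑ i ∈ r.leaves, ∑ j ∈ r.leaves, (node l r).lcaSize i j
        = ∑ i ∈ r.leaves, ∑ j ∈ r.leaves, r.lcaSize i j :=
      sum_congr rfl fun i hi => sum_congr rfl fun j hj => lcaSize_node_of_mem_right hd hi hj
    have hLR : ∑ i ∈ l.leaves, ∑ j ∈ r.leaves, (node l r).lcaSize i j
        = #l.leaves * #r.leaves * (#l.leaves + #r.leaves) := by
      rw [sum_congr rfl fun i hi => sum_congr rfl fun j hj =>
        lcaSize_node_of_mem_left_of_mem_right hd hi hj]
      simp [mul_assoc]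
    have hRL : ∑ i ∈ r.leaves, ∑ j ∈ l.leaves, (node l r).lcaSize i j
        = #l.leaves * #r.leaves * (#l.leaves + #r.leaves) := by
      rw [sum_comm, sum_congr rfl fun i _ => sum_congr rfl fun j _ => lcaSize_comm _ j i, hLR]
    rw [leaves_node, card_union_of_disjoint hd, sum_union hd]
    simp only [sum_union hd, sum_add_distrib, hLL, hRR, hLR, hRL]
    linarith

theorem IsFullTree.three_mul_sum_lt_lcaSize {T : HTree n} (hT : T.IsFullTree) :
    3 * ∑ x : Fin n × Fin n with x.1 < x.2, T.lcaSize x.1 x.2 + n = n ^ 3 := by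
  have hsum := three_mul_sum_sum_lcaSize hT.1
  rw [sum_sum_eq_two_nsmul_sum_lt_add_sum_diag _ _ T.lcaSize_comm,
    sum_congr rfl fun i hi => lcaSize_self hi, hT.2, univ_product_univ] at hsum
  simp only [sum_const, card_univ, Fintype.card_fin, smul_eq_mul, mul_one] at hsum
  linarith

theorem IsFullTree.pairCost_const {T : HTree n} (hT : T.IsFullTree) (q : ℝ) :
    T.pairCost (fun _ _ => q) = q * ((n : ℝ) ^ 3 - n) / 3 := by
  have h : 3 * ∑ x : Fin n × Fin n with x.1 < x.2, (T.lcaSize x.1 x.2 : ℝ) + n = n ^ 3 := by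
    exact_mod_cast hT.three_mul_sum_lt_lcaSize
  rw [pairCost, ← mul_sum]
  linear_combination q / 3 * h

theorem pairCost_add (w₁ w₂ : Fin n → Fin n → ℝ) (T : HTree n) :
    T.pairCost (w₁ + w₂) = T.pairCost w₁ + T.pairCost w₂ := by
  simp only [pairCost, Pi.add_apply, add_mul, sum_add_distrib]

theorem pairCost_congr {w₁ w₂ : Fin n → Fin n → ℝ} (h : ∀ i j, i < j → w₁ i j = w₂ i j)
    (T : HTree n) : T.pairCost w₁ = T.pairCost w₂ :=
  sum_congr rfl fun x hx => by rw [h x.1 x.2 (mem_filter.mp hx).2]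

end HTree

theorem planted_partition_expected_cost_general (n k : ℕ) (c : Fin n → Fin k) (q : ℝ)
    (p : Fin n → Fin n → ℝ)
    (hcross : ∀ i j, i ≠ j → c i ≠ c j → p i j = q)
    (T : HTree n) (hT : T.IsFullTree) :
    T.pairCost p
      = q * ((n : ℝ) ^ 3 - n) / 3
        + T.pairCost (fun i j => if c i = c j then p i j - q else 0) := by
  rw [← hT.pairCost_const q, ← HTree.pairCost_add]
  refine HTree.pairCost_congr (fun i j hij => ?_) T
  by_cases hc : c i = c j
  · simp [hc]
  · simp [hc, hcross i j hij.ne hc]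

/-- General planted partition model: vertices are clustered by `c`; the edge
probability is `q` across clusters and exceeds `q` within clusters.  The expected
cost of any full tree `T` equals `q(n³ - n)/3 + cost_H(T)`, where `H` carries
weight `p_{ij} - q` on intra-cluster pairs only. -/
theorem planted_partition_expected_cost (n k : ℕ) (c : Fin n → Fin k) (q : ℝ)
    (p : Fin n → Fin n → ℝ) (hsymm : ∀ i j, p i j = p j i)
    (hcross : ∀ i j, i ≠ j → c i ≠ c j → p i j = q)
    (hintra : ∀ i j, i ≠ j → c i = c j → q < p i j)
    (T : HTree n) (hT : T.IsFullTree) :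
    T.pairCost p
      = q * ((n : ℝ) ^ 3 - n) / 3
        + T.pairCost (fun i j => if c i = c j then p i j - q else 0) :=
  planted_partition_expected_cost_general n k c q p hcross T hT
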